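/- Bisimilarity is strictly finer than language equivalence on skip-free GKAT expressions: the expressions p^(1)q (loop p forever under the true test, then q) and 0 are language equivalent but not bisimilar. -/
import Mathlib


variable {At : Type} {Act : Type} {X : Type} {Y : Type} {Z : Type}

/-- Skip-free GKAT expressions; tests are represented as Boolean predicates on atoms. -/
inductive GExp (At Act : Type) : Type
  | zero : GExp At Act
  | act : Act → GExp At Act
  | add : (At → Bool) → GExp At Act → GExp At Act → GExp At Act
  | seq : GExp At Act → GExp At Act → GExp At Act
  | loop : (At → Bool) → GExp At Act → GExp At Act → GExp At Act

/-- The Brzozowski-style small-step semantics (derivative) of skip-free GKAT expressions.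
`none` is the failure output ⊥, `some (p, none)` is acceptance with action `p`,
and `some (p, some e')` is a transition to `e'` with action `p`. -/
def gderiv : GExp At Act → At → Option (Act × Option (GExp At Act))
  | .zero, _ => none
  | .act p, _ => some (p, none)
  | .add b e f, α => if b α then gderiv e α else gderiv f α
  | .seq e f, α =>
      match gderiv e α with
      | none => none
      | some (p, none) => some (p, some f)
      | some (p, some e') => some (p, some (.seq e' f))
  | .loop b e f, α =>
      if b α then
        match gderiv e α with
        | none => none
        | some (p, none) => some (p, some (.loop b e f))
        | some (p, some e') => some (p, some (.seq e' (.loop b e f)))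
      else gderiv f α

/-- A skip-free automaton structure on `X`. -/
abbrev SFA (At Act X : Type) := X → At → Option (Act × Option X)

/-- Acceptance of a guarded trace (a nonempty list of atom/action pairs) from a state. -/
inductive Accepts (h : SFA At Act X) : X → List (At × Act) → Prop
  | last {x α p} : h x α = some (p, none) → Accepts h x [(α, p)]
  | step {x α p x' w} : h x α = some (p, some x') → Accepts h x' w →
      Accepts h x ((α, p) :: w)

/-- The language of guarded traces accepted by a state of a skip-free automaton. -/
def Lang (h : SFA At Act X) (x : X) : Set (List (At × Act)) := {w | Accepts h x w}

/-- Bisimulations between skip-free automata. -/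
def IsSFBisim (h : SFA At Act X) (k : SFA At Act Y) (R : X → Y → Prop) : Prop :=
  ∀ ⦃x y⦄, R x y → ∀ α : At,
    (h x α = none ↔ k y α = none) ∧
    (∀ p : Act, h x α = some (p, none) ↔ k y α = some (p, none)) ∧
    (∀ (p : Act) (x' : X), h x α = some (p, some x') →
      ∃ y' : Y, k y α = some (p, some y') ∧ R x' y')

/-- Bisimilarity of states of skip-free automata. -/
def SFBisimilar (h : SFA At Act X) (k : SFA At Act Y) (x : X) (y : Y) : Prop :=
  ∃ R, IsSFBisim h k R ∧ R x y

/-- `p^(1)q` and `0` are language equivalent but not bisimilar, so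
bisimilarity is strictly finer than language equivalence. -/
theorem lang_equiv_not_bisimilar [Nonempty At] (p q : Act) :
    Lang gderiv (GExp.loop (fun _ => true) (GExp.act p) (GExp.act q)) =
      Lang gderiv (GExp.zero (At := At) (Act := Act)) ∧
    ¬ SFBisimilar gderiv gderiv
        (GExp.loop (fun _ => true) (GExp.act p) (GExp.act q))
        (GExp.zero (At := At) (Act := Act)) := by
  set L : GExp At Act := GExp.loop (fun _ => true) (GExp.act p) (GExp.act q) with hL
  have hstep : ∀ α : At, gderiv L α = some (p, some L) := by
    intro α; simp [hL, gderiv]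
  constructor
  · ext w
    simp only [Lang, Set.mem_setOf_eq]
    constructor
    · intro hacc
      exfalso
      induction w with
      | nil => cases hacc
      | cons a w ih =>
        cases hacc with
        | last h => rw [hstep] at h; simp at h
        | step h h' => rw [hstep] at h; simp at h; rcases h with ⟨_, rfl⟩; exact ih h'
    · intro hacc; cases hacc <;> simp_all [gderiv]
  · rintro ⟨R, hR, hr⟩
    obtain ⟨α⟩ := ‹Nonempty At›
    have := (hR hr α).1.mpr (by simp [gderiv])
    rw [hstep] at this
    simp at this
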